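/- arXiv:2207.05482 — 2 statements merged into one kernel-verified Lean document; each statement's English description precedes it below -/
import Mathlib

section
/- For all τ ∈ (0,1) and all n̄ with 0 ≤ n̄ ≤ τ, setting n_e := n̄/(1-τ), the thermal-loss capacity bound L(τ,n̄) := -log₂(τ^{n_e}(1-τ)) - h(n_e) satisfies L(τ,n̄) ≤ -log₂(1-τ); that is, the thermal-loss upper bound never exceeds the pure-loss PLOB bound. -/
/-! Since `log₂(τ^{n_e}(1-τ)) = n_e log₂ τ + log₂(1-τ)`, the claim is `-n_e log₂ τ ≤ h(n_e)`.
The constraint `n̄ ≤ τ` says exactly that `n_e/(n_e+1) ≤ τ`, so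
`-n_e log₂ τ ≤ n_e (log₂(n_e+1) - log₂ n_e) ≤ h(n_e)`, the last gap being `log₂(n_e+1) ≥ 0`. -/

/-- The entropic function `h(x) = (x+1)log₂(x+1) - x log₂ x` (with `h(0) = 0`,
which holds automatically since `Real.logb 2 0 = 0`). -/
noncomputable def entH (x : ℝ) : ℝ := (x + 1) * Real.logb 2 (x + 1) - x * Real.logb 2 x

open Real

lemma neg_mul_logb_le_entH {τ x : ℝ} (hx : 0 ≤ x) (hxτ : x / (x + 1) ≤ τ) :
    -(x * logb 2 τ) ≤ entH x := by
  rcases hx.eq_or_lt with rfl | hx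
  · simp [entH]
  have hlog_succ : 0 ≤ logb 2 (x + 1) := logb_nonneg one_lt_two (by linarith)
  calc -(x * logb 2 τ) ≤ -(x * logb 2 (x / (x + 1))) := by
        gcongr
        norm_num
    _ = x * logb 2 (x + 1) - x * logb 2 x := by
        rw [logb_div hx.ne' (by positivity)]
        ring
    _ ≤ entH x := by
        unfold entH
        linarith

lemma div_div_add_one_le {τ n : ℝ} (hτ1 : τ < 1) (hn0 : 0 ≤ n) (hn : n ≤ τ) :
    n / (1 - τ) / (n / (1 - τ) + 1) ≤ τ := by
  have h1τ : 0 < 1 - τ := by linarith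
  rw [div_add_one h1τ.ne', div_div_div_cancel_right₀ h1τ.ne',
    div_le_iff₀ (by linarith)]
  nlinarith

/-- for all `τ ∈ (0,1)` and `0 ≤ n̄ ≤ τ`, with `n_e = n̄/(1-τ)`,
the thermal-loss bound `L(τ,n̄) = -log₂(τ^{n_e}(1-τ)) - h(n_e)` never exceeds the
pure-loss PLOB bound `-log₂(1-τ)`. -/
theorem stmt_3 (τ nbar : ℝ) (hτ0 : 0 < τ) (hτ1 : τ < 1) (hn0 : 0 ≤ nbar) (hn : nbar ≤ τ) :
    -Real.logb 2 (τ ^ (nbar / (1 - τ)) * (1 - τ)) - entH (nbar / (1 - τ))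
      ≤ -Real.logb 2 (1 - τ) := by
  have h1τ : 0 < 1 - τ := by linarith
  have hentH := neg_mul_logb_le_entH (div_nonneg hn0 h1τ.le) (div_div_add_one_le hτ1 hn0 hn)
  rw [logb_mul (by positivity) h1τ.ne', logb_rpow_eq_mul_logb_of_pos hτ0]
  linarith
end

section
/- Let G = (P,E) be a finite k-regular graph and I ⊆ P a nonempty set of target nodes with P ∖ I nonempty. Then removing the set of all edges incident to I disconnects I from P ∖ I, and this set has cardinality at most k·|I|. Moreover, the minimum cardinality of an edge set whose removal disconnects I from P ∖ I equals k·|I| - S_E(I) where S_E(I) := Σ_{i∈I} |{y ∈ N(i) : y ∈ I}| counts (with multiplicity twice per edge) edges internal to I, in the case where no non-target node is adjacent to more than k/2 target nodes. -/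
/-!
A walk from `I` to its complement must traverse an edge with exactly one endpoint in `I`,
so an edge set separates `I` from `P ∖ I` exactly when it contains this edge boundary.
Hence the boundary is the smallest separating set, and it is contained in the set of edges
incident to `I`. Splitting the `k` neighbours of each `i ∈ I` into those inside and outside
`I` gives `|∂I| + S_E(I) = k·|I|`.
-/

open scoped Classical
open Finset

namespace SimpleGraph

variable {V : Type*} [Fintype V] (G : SimpleGraph V) [DecidableRel G.Adj] (I : Finset V)

lemma IsRegularOfDegree.sum_degree {k : ℕ} (hreg : G.IsRegularOfDegree k) :
    ∑ i ∈ I, G.degree i = k * #I := by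
  rw [sum_congr rfl fun i _ => hreg i, sum_const, smul_eq_mul, mul_comm]

variable [DecidableEq V]

def edgeBoundary : Finset (Sym2 V) := (G.interedges I Iᶜ).image (Function.uncurry Sym2.mk)

variable {G I}

lemma mk_mem_edgeBoundary {a b : V} (ha : a ∈ I) (hb : b ∉ I) (hab : G.Adj a b) :
    s(a, b) ∈ G.edgeBoundary I :=
  mem_image_of_mem _ (G.mk_mem_interedges_iff.2 ⟨ha, mem_compl.2 hb, hab⟩)

lemma exists_of_mem_edgeBoundary {e : Sym2 V} (he : e ∈ G.edgeBoundary I) :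
    ∃ a ∈ I, ∃ b ∉ I, G.Adj a b ∧ e = s(a, b) := by
  obtain ⟨⟨a, b⟩, hab, rfl⟩ := mem_image.1 he
  obtain ⟨ha, hb, hadj⟩ := G.mk_mem_interedges_iff.1 hab
  exact ⟨a, ha, b, mem_compl.1 hb, hadj, rfl⟩

variable (G I)

lemma edgeBoundary_subset_edgeFinset : G.edgeBoundary I ⊆ G.edgeFinset := by
  intro e he
  obtain ⟨a, -, b, -, hab, rfl⟩ := exists_of_mem_edgeBoundary he
  exact G.mem_edgeFinset.2 hab

lemma card_edgeBoundary : #(G.edgeBoundary I) = ∑ i ∈ I, #(Iᶜ.filter (G.Adj i)) := by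
  have hinj : Set.InjOn (Function.uncurry Sym2.mk : V × V → Sym2 V) (G.interedges I Iᶜ) := by
    rintro ⟨a, b⟩ hab ⟨c, d⟩ hcd h
    obtain ⟨ha, hb, -⟩ := G.mk_mem_interedges_iff.1 hab
    obtain ⟨hc, hd, -⟩ := G.mk_mem_interedges_iff.1 hcd
    rcases Sym2.eq_iff.1 h with ⟨rfl, rfl⟩ | ⟨rfl, rfl⟩
    · rfl
    · exact absurd ha (mem_compl.1 hd)
  rw [edgeBoundary, card_image_of_injOn hinj, interedges, Rel.interedges_eq_biUnion,
    card_biUnion]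
  · exact sum_congr rfl fun i _ => card_map _
  · intro x _ y _ hxy
    simp only [Function.onFun, Finset.disjoint_left, mem_map, Function.Embedding.coeFn_mk]
    rintro _ ⟨_, -, rfl⟩ ⟨_, -, h⟩
    exact hxy (Prod.ext_iff.1 h).1.symm

lemma card_edgeBoundary_add_sum_card_filter_adj :
    #(G.edgeBoundary I) + ∑ i ∈ I, #(I.filter (G.Adj i)) = ∑ i ∈ I, G.degree i := by
  rw [card_edgeBoundary, ← sum_add_distrib]
  refine sum_congr rfl fun i _ => ?_
  have hin : I.filter (G.Adj i) = (G.neighborFinset i).filter (· ∈ I) := by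
    ext v; simp [and_comm]
  have hout : Iᶜ.filter (G.Adj i) = (G.neighborFinset i).filter (· ∉ I) := by
    ext v; simp [and_comm]
  rw [hin, hout, add_comm, card_filter_add_card_filter_not, card_neighborFinset_eq_degree]

variable {G I}

lemma forall_not_reachable_deleteEdges_iff {B : Set (Sym2 V)} :
    (∀ i ∈ I, ∀ v ∉ I, ¬ (G.deleteEdges B).Reachable i v) ↔
      ↑(G.edgeBoundary I) ⊆ B := by
  constructor
  · intro hB e he
    obtain ⟨a, ha, b, hb, hab, rfl⟩ := exists_of_mem_edgeBoundary he
    by_contra heB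
    exact hB a ha b hb (deleteEdges_adj.2 ⟨hab, heB⟩).reachable
  · rintro hB i hi v hv ⟨p⟩
    obtain ⟨d, -, hd, hd'⟩ := p.exists_boundary_dart I hi hv
    have hadj := deleteEdges_adj.1 d.adj
    exact hadj.2 (hB (mk_mem_edgeBoundary hd hd' hadj.1))

variable (G I)

lemma sInf_card_separating_eq_card_edgeBoundary :
    sInf {n : ℕ | ∃ F : Finset (Sym2 V), F ⊆ G.edgeFinset ∧
        (∀ i ∈ I, ∀ v ∉ I, ¬ (G.deleteEdges ↑F).Reachable i v) ∧ n = #F}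
      = #(G.edgeBoundary I) := by
  have hmem : #(G.edgeBoundary I) ∈ {n : ℕ | ∃ F : Finset (Sym2 V), F ⊆ G.edgeFinset ∧
      (∀ i ∈ I, ∀ v ∉ I, ¬ (G.deleteEdges ↑F).Reachable i v) ∧ n = #F} :=
    ⟨_, G.edgeBoundary_subset_edgeFinset I,
      forall_not_reachable_deleteEdges_iff.2 subset_rfl, rfl⟩
  refine le_antisymm (Nat.sInf_le hmem) (le_csInf ⟨_, hmem⟩ ?_)
  rintro n ⟨F, -, hF, rfl⟩
  exact card_le_card (coe_subset.1 (forall_not_reachable_deleteEdges_iff.1 hF))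

lemma edgeBoundary_subset_filter_mem :
    G.edgeBoundary I ⊆ G.edgeFinset.filter fun e => ∃ i ∈ I, i ∈ e := by
  intro e he
  obtain ⟨a, ha, b, -, hab, rfl⟩ := exists_of_mem_edgeBoundary he
  exact mem_filter.2 ⟨G.mem_edgeFinset.2 hab, a, ha, Sym2.mem_mk_left a b⟩

lemma card_filter_mem_le_sum_degree :
    #(G.edgeFinset.filter fun e => ∃ i ∈ I, i ∈ e) ≤ ∑ i ∈ I, G.degree i := by
  calc #(G.edgeFinset.filter fun e => ∃ i ∈ I, i ∈ e)
      ≤ #(I.biUnion fun i => G.incidenceFinset i) := by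
        refine card_le_card fun e he => ?_
        obtain ⟨he, i, hi, hie⟩ := mem_filter.1 he
        exact mem_biUnion.2
          ⟨i, hi, (G.mem_incidenceFinset i e).2 ⟨G.mem_edgeFinset.1 he, hie⟩⟩
    _ ≤ ∑ i ∈ I, #(G.incidenceFinset i) := card_biUnion_le
    _ = ∑ i ∈ I, G.degree i := by simp only [card_incidenceFinset_eq_degree]

end SimpleGraph

theorem stmt_17_general {V : Type*} [Fintype V] [DecidableEq V]
    (G : SimpleGraph V) [DecidableRel G.Adj]
    (k : ℕ) (hreg : G.IsRegularOfDegree k)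
    (I : Finset V) :
    (∀ i ∈ I, ∀ v ∉ I,
      ¬ (G.deleteEdges ↑(G.edgeFinset.filter fun e => ∃ i ∈ I, i ∈ e)).Reachable i v) ∧
    (G.edgeFinset.filter fun e => ∃ i ∈ I, i ∈ e).card ≤ k * I.card ∧
    ((∀ x ∉ I, 2 * (I.filter (G.Adj x)).card ≤ k) →
      sInf {n : ℕ | ∃ F : Finset (Sym2 V), F ⊆ G.edgeFinset ∧
          (∀ i ∈ I, ∀ v ∉ I, ¬ (G.deleteEdges ↑F).Reachable i v) ∧ n = F.card}
        = k * I.card - ∑ i ∈ I, (I.filter (G.Adj i)).card) := by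
  have hdegree := hreg.sum_degree G I
  have hcount := G.card_edgeBoundary_add_sum_card_filter_adj I
  refine ⟨SimpleGraph.forall_not_reachable_deleteEdges_iff.2
      (coe_subset.2 (G.edgeBoundary_subset_filter_mem I)), ?_, fun _ => ?_⟩
  · exact hdegree ▸ G.card_filter_mem_le_sum_degree I
  · rw [G.sInf_card_separating_eq_card_edgeBoundary I]
    omega

/-- collective node isolation in regular graphs: in a finite
`k`-regular graph, removing all edges incident to a target set `I` disconnects `I`
from its complement and uses at most `k·|I|` edges; moreover, if no non-target node
is adjacent to more than `k/2` target nodes, the minimum cardinality of an edge set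
disconnecting `I` from `P ∖ I` equals `k·|I| - S_E(I)`, where
`S_E(I) = Σ_{i∈I} |N(i) ∩ I|`. -/
theorem stmt_17 {V : Type*} [Fintype V] [DecidableEq V]
    (G : SimpleGraph V) [DecidableRel G.Adj]
    (k : ℕ) (hreg : G.IsRegularOfDegree k)
    (I : Finset V) (hI : I.Nonempty) (hIc : ∃ v, v ∉ I) :
    (∀ i ∈ I, ∀ v ∉ I,
      ¬ (G.deleteEdges ↑(G.edgeFinset.filter fun e => ∃ i ∈ I, i ∈ e)).Reachable i v) ∧
    (G.edgeFinset.filter fun e => ∃ i ∈ I, i ∈ e).card ≤ k * I.card ∧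
    ((∀ x ∉ I, 2 * (I.filter (G.Adj x)).card ≤ k) →
      sInf {n : ℕ | ∃ F : Finset (Sym2 V), F ⊆ G.edgeFinset ∧
          (∀ i ∈ I, ∀ v ∉ I, ¬ (G.deleteEdges ↑F).Reachable i v) ∧ n = F.card}
        = k * I.card - ∑ i ∈ I, (I.filter (G.Adj i)).card) :=
  stmt_17_general G k hreg I
end
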